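/- Suppose the margin assumption and the boundedness assumption hold, and let (y_t,b_t) be the classifiers generated by Algorithm 3 with cone 𝕃 = ℝ^d×ℝ and stepsize γ = 1 on a sequence of agents A_0,…,A_T ∈ 𝒜. Then Σ_{t∈M_T} L_hinge( (y_*/(d_*·‖y_*‖_*), b_*/(d_*·‖y_*‖_*)); (s(A_t,y_t,b_t),1), ℓ(A_t) ) ≤ (2/(c·d_*))·|M_T|. Consequently, if d_* > 2/c, then |M_T| ≤ ((‖y_*‖₂² + b_*²)/‖y_*‖_*²) · (D̃² + 1) / (d_* − 2/c)². -/

import Mathlib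

noncomputable section
open scoped Classical
open scoped RealInnerProductSpace

/-- Feature space: `ℝ^d` with the Euclidean (`ℓ₂`) norm as ambient norm. -/
abbrev E (d : ℕ) : Type := EuclideanSpace ℝ (Fin d)

/-- Sign function with the convention `sgn 0 = +1`. -/
def sgn (t : ℝ) : ℝ := if 0 ≤ t then 1 else -1

/-- Dual norm `‖y‖_* = max { ⟪y,x⟫ : ‖x‖ ≤ 1 }` of a (semi)norm `p`. -/
def dualNorm {d : ℕ} (p : Seminorm ℝ (E d)) (y : E d) : ℝ :=
  sSup ((fun x => ⟪y, x⟫) '' {x | p x ≤ 1})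

/-- Predicted label `p̂(x,y,b) = sgn(⟪y,x⟫ + b - 2‖y‖_*/c)`. -/
def pred {d : ℕ} (p : Seminorm ℝ (E d)) (c : ℝ) (x y : E d) (b : ℝ) : ℝ :=
  sgn (⟪y, x⟫ + b - 2 * dualNorm p y / c)

/-- Agent response `r(A,y,b)`. -/
def resp {d : ℕ} (p : Seminorm ℝ (E d)) (v : E d → E d) (c : ℝ)
    (A y : E d) (b : ℝ) : E d :=
  if y ≠ 0 ∧ 0 ≤ (⟪y, A⟫ + b) / dualNorm p y ∧ (⟪y, A⟫ + b) / dualNorm p y < 2 / c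
  then A + (2 / c - (⟪y, A⟫ + b) / dualNorm p y) • v y
  else A

/-- Proxy point `s(A,y,b)`. -/
def proxy {d : ℕ} (p : Seminorm ℝ (E d)) (v : E d → E d) (lbl : E d → ℝ) (c : ℝ)
    (A y : E d) (b : ℝ) : E d :=
  if y ≠ 0 ∧ 0 ≤ (⟪y, A⟫ + b) / dualNorm p y ∧ (⟪y, A⟫ + b) / dualNorm p y < 2 / c
      ∧ lbl A = -1
  then A - ((⟪y, A⟫ + b) / dualNorm p y) • v y
  else resp p v c A y b

/-- The constant `C = sup_y ‖v(y)‖₂`. -/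
def Cconst {d : ℕ} (v : E d → E d) : ℝ := sSup (Set.range fun y => ‖v y‖)

/-- Hinge loss `L_hinge((y,b); (x,1), λ) = max{0, 1 - λ(⟪y,x⟫ + b)}`. -/
def hinge {d : ℕ} (q : E d × ℝ) (x : E d) (lab : ℝ) : ℝ :=
  max 0 (1 - lab * (⟪q.1, x⟫ + q.2))




lemma seminorm_upper {d : ℕ} (p : Seminorm ℝ (E d)) : ∃ K > 0, ∀ x, p x ≤ K * ‖x‖ := by
  set b := EuclideanSpace.basisFun (Fin d) ℝ with hb
  refine ⟨(∑ i, p (b i)) + 1, by positivity, fun x => ?_⟩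
  have hx : x = ∑ i, x i • (b i : E d) := by
    simpa [hb, EuclideanSpace.basisFun_repr] using (b.toBasis.sum_repr x).symm
  have habs : ∀ i, |x i| ≤ ‖x‖ := by
    intro i
    have h1 := abs_real_inner_le_norm (EuclideanSpace.single i (1:ℝ)) x
    simpa [EuclideanSpace.inner_single_left, EuclideanSpace.norm_single] using h1
  have hsum : p (∑ i, x i • (b i : E d)) ≤ ∑ i, p (x i • (b i : E d)) :=
    Finset.le_sum_of_subadditive p (map_zero p).le (map_add_le_add p) _ _
  calc p x ≤ ∑ i, p (x i • (b i : E d)) := by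
        conv_lhs => rw [hx]
        exact Finset.le_sum_of_subadditive p (map_zero p).le (map_add_le_add p) _ _
    _ = ∑ i, |x i| * p (b i) := by
        simp only [map_smul_eq_mul, Real.norm_eq_abs]
    _ ≤ ∑ i, ‖x‖ * p (b i) := Finset.sum_le_sum fun i _ =>
        mul_le_mul_of_nonneg_right (habs i) (apply_nonneg p _)
    _ = (∑ i, p (b i)) * ‖x‖ := by rw [← Finset.mul_sum, mul_comm]
    _ ≤ ((∑ i, p (b i)) + 1) * ‖x‖ := by nlinarith [norm_nonneg x]

lemma seminorm_lower {d : ℕ} (hd : 1 ≤ d) (p : Seminorm ℝ (E d))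
    (hpdef : ∀ x : E d, p x = 0 → x = 0) : ∃ m > 0, ∀ x, m * ‖x‖ ≤ p x := by
  obtain ⟨K, hK, hKle⟩ := seminorm_upper p
  have hcont : Continuous p := by
    refine Seminorm.continuous_of_le (q := K.toNNReal • normSeminorm ℝ (E d)) ?_ ?_
    · have : ⇑(K.toNNReal • normSeminorm ℝ (E d)) = fun x => K.toNNReal * ‖x‖ := rfl
      rw [this]; exact continuous_const.mul continuous_norm
    · intro x
      show p x ≤ K.toNNReal * ‖x‖
      simpa [Real.coe_toNNReal K hK.le] using hKle x
  have hne : (Metric.sphere (0 : E d) 1).Nonempty := by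
    refine ⟨EuclideanSpace.single ⟨0, hd⟩ (1:ℝ), ?_⟩
    simp [EuclideanSpace.norm_single]
  obtain ⟨x₀, hx₀s, hmin⟩ := (isCompact_sphere (0 : E d) 1).exists_isMinOn hne hcont.continuousOn
  have hx₀ : ‖x₀‖ = 1 := by simpa using hx₀s
  have hx₀ne : x₀ ≠ 0 := by intro h; rw [h] at hx₀; simp at hx₀
  refine ⟨p x₀, lt_of_le_of_ne (apply_nonneg p _) (fun h => hx₀ne (hpdef _ h.symm)), fun x => ?_⟩
  rcases eq_or_ne x 0 with rfl | hx
  · simp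
  · have hnx : (0:ℝ) < ‖x‖ := norm_pos_iff.mpr hx
    have hmem : ‖x‖⁻¹ • x ∈ Metric.sphere (0 : E d) 1 := by
      simp [norm_smul, abs_of_pos (inv_pos.mpr hnx), inv_mul_cancel₀ hnx.ne']
    have hthis : p x₀ ≤ ‖x‖⁻¹ * p x := by
      have h1 : p x₀ ≤ p (‖x‖⁻¹ • x) := hmin hmem
      have h2 : p (‖x‖⁻¹ • x) = ‖x‖⁻¹ * p x := by
        rw [map_smul_eq_mul]; simp [abs_of_pos (inv_pos.mpr hnx)]
      rw [h2] at h1; exact h1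
    calc p x₀ * ‖x‖ ≤ (‖x‖⁻¹ * p x) * ‖x‖ := by nlinarith [hthis]
      _ = p x := by field_simp


lemma dual_bddAbove {d : ℕ} (hd : 1 ≤ d) (p : Seminorm ℝ (E d))
    (hpdef : ∀ x : E d, p x = 0 → x = 0) (y : E d) :
    BddAbove ((fun x => ⟪y, x⟫) '' {x | p x ≤ 1}) := by
  obtain ⟨m, hm, hmle⟩ := seminorm_lower hd p hpdef
  refine ⟨‖y‖ * m⁻¹, ?_⟩
  rintro r ⟨x, hx, rfl⟩
  have hxn : ‖x‖ ≤ m⁻¹ := by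
    have h1 : m * ‖x‖ ≤ 1 := le_trans (hmle x) hx
    have h2 := mul_le_mul_of_nonneg_left h1 (inv_pos.mpr hm).le
    calc ‖x‖ = m⁻¹ * (m * ‖x‖) := by field_simp
      _ ≤ m⁻¹ * 1 := h2
      _ = m⁻¹ := mul_one _
  calc ⟪y, x⟫ ≤ ‖y‖ * ‖x‖ := real_inner_le_norm y x
    _ ≤ ‖y‖ * m⁻¹ := by nlinarith [norm_nonneg y]

lemma le_dualNorm {d : ℕ} (hd : 1 ≤ d) (p : Seminorm ℝ (E d))
    (hpdef : ∀ x : E d, p x = 0 → x = 0) {y x : E d} (hx : p x ≤ 1) :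
    ⟪y, x⟫ ≤ dualNorm p y :=
  le_csSup (dual_bddAbove hd p hpdef y) ⟨x, hx, rfl⟩

lemma dualNorm_zero {d : ℕ} (p : Seminorm ℝ (E d)) : dualNorm p 0 = 0 := by
  have h : ((fun x => ⟪(0 : E d), x⟫) '' {x | p x ≤ 1}) = {0} := by
    apply Set.eq_singleton_iff_nonempty_unique_mem.mpr
    constructor
    · exact ⟨0, ⟨0, by simp⟩⟩
    · rintro r ⟨x, hx, rfl⟩; simp
  rw [dualNorm, h, csSup_singleton]

lemma dualNorm_pos {d : ℕ} (hd : 1 ≤ d) (p : Seminorm ℝ (E d))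
    (hpdef : ∀ x : E d, p x = 0 → x = 0) {y : E d} (hy : y ≠ 0) :
    0 < dualNorm p y := by
  have hpy : 0 < p y := lt_of_le_of_ne (apply_nonneg p _) (fun h => hy (hpdef _ h.symm))
  have hx : p ((p y)⁻¹ • y) ≤ 1 := by
    rw [map_smul_eq_mul, Real.norm_eq_abs, abs_of_pos (inv_pos.mpr hpy),
      inv_mul_cancel₀ hpy.ne']
  have h1 : ⟪y, (p y)⁻¹ • y⟫ ≤ dualNorm p y := le_dualNorm hd p hpdef hx
  have h2 : ⟪y, (p y)⁻¹ • y⟫ = (p y)⁻¹ * ‖y‖ ^ 2 := by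
    rw [real_inner_smul_right, real_inner_self_eq_norm_sq]
  have hyn : 0 < ‖y‖ := norm_pos_iff.mpr hy
  nlinarith [mul_pos (inv_pos.mpr hpy) (mul_pos hyn hyn)]


section steps
variable {d : ℕ} {p : Seminorm ℝ (E d)} {v : E d → E d} {lbl : E d → ℝ} {c : ℝ}

lemma proxy_form (hc : 0 < c) (hv0 : v 0 = 0) (A y : E d) (b : ℝ) :
    ∃ α : ℝ, |α| ≤ 2 / c ∧ proxy p v lbl c A y b = A + α • v y := by
  have h2c : 0 < 2 / c := by positivity
  set u := (⟪y, A⟫ + b) / dualNorm p y with hu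
  rw [proxy, resp]
  by_cases h1 : y ≠ 0 ∧ 0 ≤ u ∧ u < 2 / c ∧ lbl A = -1
  · rw [if_pos h1]
    exact ⟨-u, by rw [abs_neg, abs_of_nonneg h1.2.1]; linarith [h1.2.2.1], by
      rw [neg_smul, sub_eq_add_neg]⟩
  · rw [if_neg h1]
    by_cases h2 : y ≠ 0 ∧ 0 ≤ u ∧ u < 2 / c
    · rw [if_pos h2]
      exact ⟨2 / c - u, by rw [abs_of_nonneg (by linarith [h2.2.2])]; linarith [h2.2.1], rfl⟩
    · rw [if_neg h2]
      exact ⟨0, by simp [h2c.le], by simp⟩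

lemma abs_inner_v_le (hd : 1 ≤ d) (hpdef : ∀ x : E d, p x = 0 → x = 0)
    (hv0 : v 0 = 0) (hv : ∀ y : E d, y ≠ 0 → p (v y) ≤ 1 ∧ ⟪y, v y⟫ = dualNorm p y)
    (ystar : E d) (hystar : ystar ≠ 0) (y : E d) :
    |⟪ystar, v y⟫| ≤ dualNorm p ystar := by
  rcases eq_or_ne y 0 with rfl | hy
  · simp [hv0]
    exact (dualNorm_pos hd p hpdef hystar).le
  · have h1 := (hv y hy).1
    have hpos : ⟪ystar, v y⟫ ≤ dualNorm p ystar := le_dualNorm hd p hpdef h1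
    have hneg : ⟪ystar, -(v y)⟫ ≤ dualNorm p ystar :=
      le_dualNorm hd p hpdef (by rw [map_neg_eq_map]; exact h1)
    rw [inner_neg_right] at hneg
    exact abs_le.mpr ⟨by linarith, hpos⟩

/-- Margin for the proxy point. -/
lemma proxy_margin (hd : 1 ≤ d) (hpdef : ∀ x : E d, p x = 0 → x = 0)
    (hc : 0 < c) (hv0 : v 0 = 0)
    (hv : ∀ y : E d, y ≠ 0 → p (v y) ≤ 1 ∧ ⟪y, v y⟫ = dualNorm p y)
    (ystar : E d) (bstar dstar : ℝ) (hystar : ystar ≠ 0)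
    {A : E d} (hlblA : lbl A = 1 ∨ lbl A = -1) (hsepA : dstar * dualNorm p ystar ≤ lbl A * (⟪ystar, A⟫ + bstar))
    (y : E d) (b : ℝ) :
    (dstar - 2 / c) * dualNorm p ystar ≤
      lbl A * (⟪ystar, proxy p v lbl c A y b⟫ + bstar) := by
  obtain ⟨α, hα, hform⟩ := proxy_form hc hv0 A y b
  rw [hform, inner_add_right, real_inner_smul_right]
  have hiv := abs_inner_v_le hd hpdef hv0 hv ystar hystar y
  have hl : |lbl A| = 1 := by rcases hlblA with h | h <;> simp [h]
  have hkey : -(2 / c * dualNorm p ystar) ≤ lbl A * (α * ⟪ystar, v y⟫) := by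
    have h1 : |lbl A * (α * ⟪ystar, v y⟫)| ≤ 2 / c * dualNorm p ystar := by
      rw [abs_mul, abs_mul, hl, one_mul]
      exact mul_le_mul hα hiv (abs_nonneg _) (by positivity)
    linarith [neg_abs_le (lbl A * (α * ⟪ystar, v y⟫))]
  have : lbl A * (⟪ystar, A⟫ + α * ⟪ystar, v y⟫ + bstar)
      = lbl A * (⟪ystar, A⟫ + bstar) + lbl A * (α * ⟪ystar, v y⟫) := by ring
  rw [this]
  nlinarith [hsepA]
end steps

section steps2
variable {d : ℕ} {p : Seminorm ℝ (E d)} {v : E d → E d} {lbl : E d → ℝ} {c : ℝ}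

lemma proxy_norm_le (hc : 0 < c) (hv0 : v 0 = 0)
    (hCbdd : BddAbove (Set.range fun y => ‖v y‖)) (A y : E d) (b : ℝ) :
    ‖proxy p v lbl c A y b‖ ≤ ‖A‖ + 2 / c * Cconst v := by
  obtain ⟨α, hα, hform⟩ := proxy_form hc hv0 A y b
  have hvC : ‖v y‖ ≤ Cconst v := le_csSup hCbdd ⟨y, rfl⟩
  calc ‖proxy p v lbl c A y b‖ ≤ ‖A‖ + ‖α • v y‖ := by rw [hform]; exact norm_add_le _ _
    _ = ‖A‖ + |α| * ‖v y‖ := by rw [norm_smul, Real.norm_eq_abs]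
    _ ≤ ‖A‖ + 2 / c * Cconst v := by
        have : |α| * ‖v y‖ ≤ 2 / c * Cconst v :=
          mul_le_mul hα hvC (norm_nonneg _) (by positivity)
        linarith

lemma wrong_side (hd : 1 ≤ d) (hpdef : ∀ x : E d, p x = 0 → x = 0)
    (hc : 0 < c) (hv0 : v 0 = 0)
    (hv : ∀ y : E d, y ≠ 0 → p (v y) ≤ 1 ∧ ⟪y, v y⟫ = dualNorm p y)
    {A : E d} (hlblA : lbl A = 1 ∨ lbl A = -1) (y : E d) (b : ℝ)
    (hmis : pred p c (resp p v c A y b) y b ≠ lbl A) :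
    lbl A * (⟪y, proxy p v lbl c A y b⟫ + b) ≤ 0 := by
  have h2c : 0 < 2 / c := by positivity
  rcases eq_or_ne y 0 with rfl | hy
  · have hresp : resp p v c A 0 b = A := by rw [resp, if_neg (by simp)]
    have hproxy : proxy p v lbl c A 0 b = A := by
      rw [proxy, if_neg (by simp), hresp]
    rw [hproxy, inner_zero_left]
    rw [pred, hresp, inner_zero_left, dualNorm_zero] at hmis
    rcases hlblA with h | h <;> rw [h] at hmis ⊢
    · rw [sgn] at hmis
      by_cases hb : 0 ≤ 0 + b - 2 * 0 / c
      · rw [if_pos hb] at hmis; exact absurd rfl hmis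
      · push_neg at hb; norm_num at hb ⊢; linarith
    · rw [sgn] at hmis
      by_cases hb : 0 ≤ 0 + b - 2 * 0 / c
      · norm_num at hb ⊢; linarith
      · rw [if_neg hb] at hmis; exact absurd rfl hmis
  · set N := dualNorm p y with hNdef
    have hN : 0 < N := dualNorm_pos hd p hpdef hy
    set u := (⟪y, A⟫ + b) / N with hu
    have huN : u * N = ⟪y, A⟫ + b := div_mul_cancel₀ _ hN.ne'
    have hvy : ⟪y, v y⟫ = N := (hv y hy).2
    clear_value N u
    by_cases h2 : 0 ≤ u ∧ u < 2 / c
    · -- manipulation range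
      have hresp : resp p v c A y b = A + (2 / c - u) • v y := by
        rw [resp, ← hNdef, ← hu, if_pos ⟨hy, h2.1, h2.2⟩]
      have harg : ⟪y, resp p v c A y b⟫ + b - 2 * N / c = 0 := by
        rw [hresp, inner_add_right, real_inner_smul_right, hvy]
        have : ⟪y, A⟫ + b = u * N := huN.symm
        rw [add_comm (⟪y, A⟫) _, add_assoc]
        rw [this]; ring
      have hpred : pred p c (resp p v c A y b) y b = 1 := by
        rw [pred, ← hNdef, harg, sgn, if_pos le_rfl]
      rw [hpred] at hmis
      have hlA : lbl A = -1 := by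
        rcases hlblA with h | h
        · exact absurd h.symm hmis
        · exact h
      have hproxy : proxy p v lbl c A y b = A - u • v y := by
        rw [proxy, ← hNdef, ← hu, if_pos ⟨hy, h2.1, h2.2, hlA⟩]
      have : ⟪y, proxy p v lbl c A y b⟫ + b = 0 := by
        rw [hproxy, inner_sub_right, real_inner_smul_right, hvy]
        nlinarith [huN]
      rw [this, hlA]; norm_num
    · -- no manipulation
      have hresp : resp p v c A y b = A := by
        rw [resp, ← hNdef, ← hu, if_neg (by tauto)]
      have hproxy : proxy p v lbl c A y b = A := by
        rw [proxy, ← hNdef, ← hu, if_neg (by tauto), hresp]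
      rw [hproxy]
      rw [pred, hresp, ← hNdef] at hmis
      rw [← huN]
      push_neg at h2
      by_cases hu0 : 0 ≤ u
      · have hu2 : 2 / c ≤ u := h2 hu0
        have hsgn : sgn (⟪y, A⟫ + b - 2 * N / c) = 1 := by
          rw [sgn, if_pos (by
            have key : 2/c*N ≤ u*N := mul_le_mul_of_nonneg_right hu2 hN.le
            have he : 2/c*N = 2*N/c := by ring
            linarith [huN, key, he])]
        rw [hsgn] at hmis
        have hlA : lbl A = -1 := by
          rcases hlblA with h | h
          · exact absurd h.symm hmis
          · exact h
        rw [hlA]; nlinarith [mul_nonneg hu0 hN.le]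
      · push_neg at hu0
        have hsgn : sgn (⟪y, A⟫ + b - 2 * N / c) = -1 := by
          rw [sgn, if_neg (by
            push_neg
            have key : 0 < 2/c*N := mul_pos h2c hN
            have he : 2/c*N = 2*N/c := by ring
            have hun : u * N < 0 := mul_neg_of_neg_of_pos hu0 hN
            linarith [huN, key, he, hun])]
        rw [hsgn] at hmis
        have hlA : lbl A = 1 := by
          rcases hlblA with h | h
          · exact h
          · exact absurd h.symm hmis
        rw [hlA]; nlinarith [mul_pos (neg_pos.mpr hu0) hN]
end steps2

set_option maxHeartbeats 1000000

/-- Theorem `perceptron-mistake-bound`: under the margin and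
boundedness assumptions, the (unprojected) strategic perceptron with `γ = 1`
satisfies the hinge-loss bound against `(y_*,b_*)/(d_*‖y_*‖_*)`, and hence has at
most `((‖y_*‖₂² + b_*²)/‖y_*‖_*²)·(D̃² + 1)/(d_* - 2/c)²` mistakes when
`d_* > 2/c`. -/
theorem alg3_mistake_bound_no_projection
    {d : ℕ} (hd : 1 ≤ d)
    (p : Seminorm ℝ (E d)) (hpdef : ∀ x : E d, p x = 0 → x = 0)
    (c : ℝ) (hc : 0 < c)
    (v : E d → E d) (hv0 : v 0 = 0)
    (hv : ∀ y : E d, y ≠ 0 → p (v y) ≤ 1 ∧ ⟪y, v y⟫ = dualNorm p y)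
    (lbl : E d → ℝ) (hlbl : ∀ A : E d, lbl A = 1 ∨ lbl A = -1)
    (𝒜 : Set (E d))
    -- margin assumption
    (ystar : E d) (bstar dstar : ℝ)
    (hystar : ystar ≠ 0) (hdstar : 0 < dstar)
    (hsep : ∀ A ∈ 𝒜, dstar * dualNorm p ystar ≤ lbl A * (⟪ystar, A⟫ + bstar))
    (hmax : ∀ (y : E d) (b t : ℝ), y ≠ 0 →
      (∀ A ∈ 𝒜, t * dualNorm p y ≤ lbl A * (⟪y, A⟫ + b)) → t ≤ dstar)
    -- boundedness assumption
    (hbdd : ∃ D : ℝ, ∀ A ∈ 𝒜, ‖A‖ ≤ D)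
    (hCbdd : BddAbove (Set.range fun y => ‖v y‖))
    -- Algorithm 3 with cone `𝕃 = ℝ^d × ℝ` (no projection) and stepsize `γ = 1`
    (T : ℕ) (Ag : ℕ → E d) (hAg : ∀ t, Ag t ∈ 𝒜)
    (ys : ℕ → E d) (bs : ℕ → ℝ)
    (hinit : ys 0 = 0 ∧ bs 0 = 0)
    (hupd : ∀ t : ℕ,
      (pred p c (resp p v c (Ag t) (ys t) (bs t)) (ys t) (bs t) ≠ lbl (Ag t) →
        ys (t + 1) = ys t + lbl (Ag t) • proxy p v lbl c (Ag t) (ys t) (bs t) ∧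
        bs (t + 1) = bs t + lbl (Ag t)) ∧
      (pred p c (resp p v c (Ag t) (ys t) (bs t)) (ys t) (bs t) = lbl (Ag t) →
        ys (t + 1) = ys t ∧ bs (t + 1) = bs t)) :
    ∀ M : Finset ℕ,
      M = (Finset.range (T + 1)).filter (fun t =>
        pred p c (resp p v c (Ag t) (ys t) (bs t)) (ys t) (bs t) ≠ lbl (Ag t)) →
    ∀ Dtil : ℝ, Dtil = sSup ((fun A => ‖A‖) '' 𝒜) + 2 * Cconst v / c →
      (∑ t ∈ M, hinge ((dstar * dualNorm p ystar)⁻¹ • ystar,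
            bstar / (dstar * dualNorm p ystar))
          (proxy p v lbl c (Ag t) (ys t) (bs t)) (lbl (Ag t)) ≤
        2 / (c * dstar) * M.card) ∧
      (2 / c < dstar →
        (M.card : ℝ) ≤
          (‖ystar‖ ^ 2 + bstar ^ 2) / (dualNorm p ystar) ^ 2 *
            (Dtil ^ 2 + 1) / (dstar - 2 / c) ^ 2) := by
  intro M hM Dtil hDtil
  have hNpos : 0 < dualNorm p ystar := dualNorm_pos hd p hpdef hystar
  have h2c : 0 < 2 / c := by positivity
  have hmargin : ∀ t : ℕ, (dstar - 2 / c) * dualNorm p ystar ≤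
      lbl (Ag t) * (⟪ystar, proxy p v lbl c (Ag t) (ys t) (bs t)⟫ + bstar) :=
    fun t => proxy_margin hd hpdef hc hv0 hv ystar bstar dstar hystar (hlbl (Ag t))
      (hsep _ (hAg t)) _ _
  constructor
  · -- Part 1: hinge loss bound
    have hterm : ∀ t : ℕ,
        hinge ((dstar * dualNorm p ystar)⁻¹ • ystar, bstar / (dstar * dualNorm p ystar))
          (proxy p v lbl c (Ag t) (ys t) (bs t)) (lbl (Ag t)) ≤ 2 / (c * dstar) := by
      intro t
      have hDN : 0 < dstar * dualNorm p ystar := mul_pos hdstar hNpos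
      have hq : ⟪(dstar * dualNorm p ystar)⁻¹ • ystar, proxy p v lbl c (Ag t) (ys t) (bs t)⟫
            + bstar / (dstar * dualNorm p ystar)
          = (dstar * dualNorm p ystar)⁻¹
            * (⟪ystar, proxy p v lbl c (Ag t) (ys t) (bs t)⟫ + bstar) := by
        rw [real_inner_smul_left]; field_simp
      rw [hinge]
      dsimp only
      rw [hq]
      refine max_le (by positivity) ?_
      have hm := hmargin t
      have hrw : lbl (Ag t) * ((dstar * dualNorm p ystar)⁻¹
            * (⟪ystar, proxy p v lbl c (Ag t) (ys t) (bs t)⟫ + bstar))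
          = (dstar * dualNorm p ystar)⁻¹
            * (lbl (Ag t) * (⟪ystar, proxy p v lbl c (Ag t) (ys t) (bs t)⟫ + bstar)) := by
        ring
      rw [hrw]
      have h1 : (dstar * dualNorm p ystar)⁻¹ * ((dstar - 2 / c) * dualNorm p ystar)
          ≤ (dstar * dualNorm p ystar)⁻¹
            * (lbl (Ag t) * (⟪ystar, proxy p v lbl c (Ag t) (ys t) (bs t)⟫ + bstar)) :=
        mul_le_mul_of_nonneg_left hm (by positivity)
      have h2 : (dstar * dualNorm p ystar)⁻¹ * ((dstar - 2 / c) * dualNorm p ystar)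
          = 1 - 2 / (c * dstar) := by
        field_simp
      rw [h2] at h1
      linarith
    calc ∑ t ∈ M, hinge ((dstar * dualNorm p ystar)⁻¹ • ystar,
            bstar / (dstar * dualNorm p ystar))
          (proxy p v lbl c (Ag t) (ys t) (bs t)) (lbl (Ag t))
        ≤ ∑ _t ∈ M, (2 / (c * dstar)) := Finset.sum_le_sum fun t _ => hterm t
      _ = 2 / (c * dstar) * M.card := by rw [Finset.sum_const, nsmul_eq_mul, mul_comm]
  · -- Part 2: mistake bound
    intro hgap
    have hμpos : 0 < (dstar - 2 / c) * dualNorm p ystar :=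
      mul_pos (by linarith) hNpos
    obtain ⟨D₀, hD₀⟩ := hbdd
    have hDbdd : BddAbove ((fun A => ‖A‖) '' 𝒜) :=
      ⟨D₀, by rintro r ⟨A, hA, rfl⟩; exact hD₀ A hA⟩
    have hsle : ∀ t : ℕ, ‖proxy p v lbl c (Ag t) (ys t) (bs t)‖ ≤ Dtil := by
      intro t
      have hA := le_csSup hDbdd ⟨Ag t, hAg t, rfl⟩
      have h1 := proxy_norm_le (p := p) (lbl := lbl) hc hv0 hCbdd (Ag t) (ys t) (bs t)
      rw [hDtil]
      have he : 2 / c * Cconst v = 2 * Cconst v / c := by ring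
      linarith [he ▸ h1]
    have hI : ∀ n : ℕ,
        (((Finset.range n).filter (fun t =>
            pred p c (resp p v c (Ag t) (ys t) (bs t)) (ys t) (bs t) ≠ lbl (Ag t))).card : ℝ)
            * ((dstar - 2 / c) * dualNorm p ystar)
          ≤ ⟪ystar, ys n⟫ + bstar * bs n ∧
        ‖ys n‖ ^ 2 + (bs n) ^ 2
          ≤ (((Finset.range n).filter (fun t =>
            pred p c (resp p v c (Ag t) (ys t) (bs t)) (ys t) (bs t) ≠ lbl (Ag t))).card : ℝ)
            * (Dtil ^ 2 + 1) := by
      intro n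
      induction n with
      | zero => simp [hinit.1, hinit.2]
      | succ n ih =>
        by_cases hm : pred p c (resp p v c (Ag n) (ys n) (bs n)) (ys n) (bs n) ≠ lbl (Ag n)
        · have hupd1 := (hupd n).1 hm
          have hwsfull := wrong_side hd hpdef hc hv0 hv (hlbl (Ag n)) (ys n) (bs n) hm
          have hmarg := hmargin n
          have hsqfull := hsle n
          set S := proxy p v lbl c (Ag n) (ys n) (bs n) with hS
          clear_value S
          have hknew : ((Finset.range (n+1)).filter (fun t =>
              pred p c (resp p v c (Ag t) (ys t) (bs t)) (ys t) (bs t) ≠ lbl (Ag t))).card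
              = ((Finset.range n).filter (fun t =>
              pred p c (resp p v c (Ag t) (ys t) (bs t)) (ys t) (bs t) ≠ lbl (Ag t))).card + 1 := by
            rw [Finset.range_add_one, Finset.filter_insert, if_pos hm,
              Finset.card_insert_of_notMem (by simp)]
          have hlA : |lbl (Ag n)| = 1 := by
            rcases hlbl (Ag n) with h | h <;> simp [h]
          set K := ((Finset.range n).filter (fun t =>
            pred p c (resp p v c (Ag t) (ys t) (bs t)) (ys t) (bs t) ≠ lbl (Ag t))).card with hK
          clear_value K
          constructor
          · rw [hknew, hupd1.1, hupd1.2, inner_add_right, real_inner_smul_right]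
            push_cast
            nlinarith [ih.1, hmarg]
          · rw [hknew, hupd1.1, hupd1.2]
            push_cast
            have hnorm : ‖ys n + lbl (Ag n) • S‖ ^ 2
                = ‖ys n‖ ^ 2
                  + 2 * (lbl (Ag n) * ⟪ys n, S⟫)
                  + ‖S‖ ^ 2 := by
              rw [norm_add_sq_real, real_inner_smul_right, norm_smul, Real.norm_eq_abs,
                hlA, one_mul]
            rw [hnorm]
            have hsq : ‖S‖ ^ 2 ≤ Dtil ^ 2 := by
              nlinarith [hsqfull, norm_nonneg S]
            have hl2 : lbl (Ag n) ^ 2 = 1 := by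
              rcases hlbl (Ag n) with h | h <;> rw [h] <;> norm_num
            nlinarith [ih.2, hwsfull, hsq, hl2]
        · have hupd2 := (hupd n).2 (not_not.mp hm)
          have hknew : ((Finset.range (n+1)).filter (fun t =>
              pred p c (resp p v c (Ag t) (ys t) (bs t)) (ys t) (bs t) ≠ lbl (Ag t))).card
              = ((Finset.range n).filter (fun t =>
              pred p c (resp p v c (Ag t) (ys t) (bs t)) (ys t) (bs t) ≠ lbl (Ag t))).card := by
            rw [Finset.range_add_one, Finset.filter_insert, if_neg hm]
          rw [hknew, hupd2.1, hupd2.2]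
          exact ih
    have hItop := hI (T + 1)
    rw [← hM] at hItop
    have hK0 : (0:ℝ) ≤ (M.card : ℝ) := Nat.cast_nonneg _
    have h1 := hItop.1
    have h2 := hItop.2
    have hphi0 : 0 ≤ ⟪ystar, ys (T+1)⟫ + bstar * bs (T+1) :=
      le_trans (mul_nonneg hK0 hμpos.le) h1
    have h3 : ⟪ystar, ys (T+1)⟫ + bstar * bs (T+1)
        ≤ ‖ystar‖ * ‖ys (T+1)‖ + |bstar| * |bs (T+1)| := by
      have ha := real_inner_le_norm ystar (ys (T+1))
      have hb : bstar * bs (T+1) ≤ |bstar| * |bs (T+1)| := by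
        rw [← abs_mul]; exact le_abs_self _
      linarith
    have h4 : (⟪ystar, ys (T+1)⟫ + bstar * bs (T+1)) ^ 2
        ≤ (‖ystar‖ * ‖ys (T+1)‖ + |bstar| * |bs (T+1)|) ^ 2 := by
      nlinarith [h3, hphi0]
    have h5 : (‖ystar‖ * ‖ys (T+1)‖ + |bstar| * |bs (T+1)|) ^ 2
        ≤ (‖ystar‖ ^ 2 + bstar ^ 2) * (‖ys (T+1)‖ ^ 2 + (bs (T+1)) ^ 2) := by
      nlinarith [sq_nonneg (‖ystar‖ * |bs (T+1)| - |bstar| * ‖ys (T+1)‖),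
        sq_abs (bs (T+1)), sq_abs bstar,
        mul_nonneg (norm_nonneg ystar) (norm_nonneg (ys (T+1))),
        mul_nonneg (abs_nonneg bstar) (abs_nonneg (bs (T+1)))]
    have hS0 : (0:ℝ) ≤ ‖ystar‖ ^ 2 + bstar ^ 2 := by positivity
    have h6 : ((M.card : ℝ) * ((dstar - 2 / c) * dualNorm p ystar)) ^ 2
        ≤ (‖ystar‖ ^ 2 + bstar ^ 2) * ((M.card : ℝ) * (Dtil ^ 2 + 1)) := by
      have hstep1 : ((M.card : ℝ) * ((dstar - 2 / c) * dualNorm p ystar)) ^ 2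
          ≤ (⟪ystar, ys (T+1)⟫ + bstar * bs (T+1)) ^ 2 := by
        nlinarith [h1, mul_nonneg hK0 hμpos.le]
      calc ((M.card : ℝ) * ((dstar - 2 / c) * dualNorm p ystar)) ^ 2
          ≤ (⟪ystar, ys (T+1)⟫ + bstar * bs (T+1)) ^ 2 := hstep1
        _ ≤ (‖ystar‖ ^ 2 + bstar ^ 2) * (‖ys (T+1)‖ ^ 2 + (bs (T+1)) ^ 2) :=
            le_trans h4 h5
        _ ≤ (‖ystar‖ ^ 2 + bstar ^ 2) * ((M.card : ℝ) * (Dtil ^ 2 + 1)) :=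
            mul_le_mul_of_nonneg_left h2 hS0
    rcases eq_or_lt_of_le hK0 with hK | hK
    · rw [← hK]
      positivity
    · have h7 : (M.card : ℝ) * ((M.card : ℝ) * ((dstar - 2 / c) * dualNorm p ystar) ^ 2)
          ≤ (M.card : ℝ) * ((‖ystar‖ ^ 2 + bstar ^ 2) * (Dtil ^ 2 + 1)) := by
        nlinarith [h6]
      have h8 : (M.card : ℝ) * ((dstar - 2 / c) * dualNorm p ystar) ^ 2
          ≤ (‖ystar‖ ^ 2 + bstar ^ 2) * (Dtil ^ 2 + 1) :=
        le_of_mul_le_mul_left h7 hK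
      rw [div_mul_eq_mul_div, div_div,
        le_div_iff₀ (mul_pos (pow_pos hNpos 2)
          (pow_pos (by linarith : (0:ℝ) < dstar - 2 / c) 2))]
      nlinarith [h8]
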